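/- For λ, t, r > 0 the function I(λ/r, z) = 1 - j_α(λz/r) with α > -1/2 satisfies: ∫₀¹ (1 - j_α(λz/r)) dz ≥ C₁·min{1, (λ/r)²} for a positive constant C₁ depending only on α. -/

import Mathlib

/-!
Put `w(y) = (1 - y²)^(α - 1/2)`. Substituting `u = y²` in the Beta integral gives
`∫₀¹ w = √π Γ(α + 1/2) / (2 Γ(α + 1))`, so the Mehler constant `c` normalises `w` and
`1 - j(x) = c ∫₀¹ w(y) (1 - cos (x y)) dy`. Averaging over `z ∈ [0, 1]` and exchanging the
integrals turns the inner factor into `∫₀¹ (1 - cos (s y z)) dz = 1 - sin (s y) / (s y)`, where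
`s = λ / r`. From `1 - cos t ≥ 2 t² / π²` on `[0, π]` one gets
`1 - sin u / u ≥ 2 / (3 π²) · min 1 u²`, and `min 1 (s y)² ≥ y² min 1 s²` for `y ≤ 1`, so
`C₁ = 2 c / (3 π²) · ∫₀¹ w(y) y² dy` works.
-/

open Real MeasureTheory Set ProbabilityTheory

lemma sq_image_Ioo_zero_one : (fun y : ℝ => y ^ 2) '' Ioo 0 1 = Ioo 0 1 := by
  ext x
  constructor
  · rintro ⟨y, ⟨hy0, hy1⟩, rfl⟩
    exact ⟨by positivity, by nlinarith⟩
  · rintro ⟨hx0, hx1⟩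
    refine ⟨√x, ⟨sqrt_pos.2 hx0, (sqrt_lt' one_pos).2 (by simpa using hx1)⟩, sq_sqrt hx0.le⟩

lemma setLIntegral_rpow_mul_one_sub_rpow {a b : ℝ} (ha : 0 < a) (hb : 0 < b) :
    ∫⁻ x in Ioo 0 1, ENNReal.ofReal (x ^ (a - 1) * (1 - x) ^ (b - 1)) =
      ENNReal.ofReal (beta a b) := by
  have hB := beta_pos ha hb
  have h := lintegral_betaPDF_eq_one ha hb
  simp_rw [lintegral_betaPDF, mul_assoc, ENNReal.ofReal_mul (one_div_pos.2 hB).le] at h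
  rwa [lintegral_const_mul' _ _ ENNReal.ofReal_ne_top, one_div, ENNReal.ofReal_inv_of_pos hB,
    ← ENNReal.div_eq_inv_mul, ENNReal.div_eq_one_iff (by simpa) ENNReal.ofReal_ne_top] at h

lemma setLIntegral_one_sub_sq_rpow {p : ℝ} (hp : -1 < p) :
    ∫⁻ y in Ioo 0 1, ENNReal.ofReal ((1 - y ^ 2) ^ p) =
      ENNReal.ofReal (beta (1 / 2) (p + 1) / 2) := by
  have h := setLIntegral_rpow_mul_one_sub_rpow (a := 1 / 2) (b := p + 1) one_half_pos
    (by linarith)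
  rw [← sq_image_Ioo_zero_one, lintegral_image_eq_lintegral_abs_deriv_mul measurableSet_Ioo
    (f' := fun y => 2 * y) (fun y _ => by simpa using (hasDerivAt_pow 2 y).hasDerivWithinAt)
    ((pow_left_strictMonoOn₀ two_ne_zero).mono
      (Ioo_subset_Ioi_self.trans Ioi_subset_Ici_self)).injOn] at h
  rw [ENNReal.ofReal_div_of_pos two_pos, ← h, ENNReal.eq_div_iff (by simp) (by simp),
    ← lintegral_const_mul _ (by fun_prop)]
  refine setLIntegral_congr_fun measurableSet_Ioo fun y ⟨hy0, _⟩ => ?_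
  rw [← ENNReal.ofReal_mul (abs_nonneg _), ← ENNReal.ofReal_mul zero_le_two]
  congr 1
  rw [abs_of_pos (by positivity), ← rpow_natCast, ← rpow_mul hy0.le, add_sub_cancel_right]
  norm_num
  rw [rpow_neg_one]
  field_simp

lemma one_sub_sq_rpow_nonneg_ae (p : ℝ) :
    0 ≤ᵐ[volume.restrict (Ioo 0 1)] fun y : ℝ => (1 - y ^ 2) ^ p :=
  ae_restrict_of_forall_mem measurableSet_Ioo fun y ⟨hy0, hy1⟩ =>
    rpow_nonneg (by nlinarith) p

lemma intervalIntegrable_one_sub_sq_rpow {p : ℝ} (hp : -1 < p) :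
    IntervalIntegrable (fun y : ℝ => (1 - y ^ 2) ^ p) volume 0 1 := by
  rw [intervalIntegrable_iff_integrableOn_Ioo_of_le zero_le_one]
  refine ⟨(by fun_prop : Measurable _).aestronglyMeasurable,
    (hasFiniteIntegral_iff_ofReal (one_sub_sq_rpow_nonneg_ae p)).2 ?_⟩
  rw [setLIntegral_one_sub_sq_rpow hp]
  exact ENNReal.ofReal_lt_top

lemma integral_one_sub_sq_rpow {p : ℝ} (hp : -1 < p) :
    ∫ y in (0 : ℝ)..1, (1 - y ^ 2) ^ p = beta (1 / 2) (p + 1) / 2 := by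
  rw [intervalIntegral.integral_of_le zero_le_one, integral_Ioc_eq_integral_Ioo,
    integral_eq_lintegral_of_nonneg_ae (one_sub_sq_rpow_nonneg_ae p)
      (by fun_prop : Measurable _).aestronglyMeasurable,
    setLIntegral_one_sub_sq_rpow hp, ENNReal.toReal_ofReal]
  exact (div_pos (beta_pos one_half_pos (by linarith)) two_pos).le

lemma mehler_const_mul_integral_one_sub_sq_rpow {α : ℝ} (hα : -1 / 2 < α) :
    2 * Gamma (α + 1) / (√π * Gamma (α + 1 / 2)) *
      ∫ y in (0 : ℝ)..1, (1 - y ^ 2) ^ (α - 1 / 2) = 1 := by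
  have hA := Gamma_pos_of_pos (by linarith : 0 < α + 1)
  have hB := Gamma_pos_of_pos (by linarith : 0 < α + 1 / 2)
  rw [integral_one_sub_sq_rpow (by linarith), beta, Gamma_one_half_eq,
    show α - 1 / 2 + 1 = α + 1 / 2 by ring, show 1 / 2 + (α + 1 / 2) = α + 1 by ring]
  generalize Gamma (α + 1) = A at hA ⊢
  generalize Gamma (α + 1 / 2) = B at hB ⊢
  field_simp

lemma mul_cube_le_sub_sin {u : ℝ} (hu : 0 ≤ u) (huπ : u ≤ π) :
    2 / (3 * π ^ 2) * u ^ 3 ≤ u - sin u :=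
  calc 2 / (3 * π ^ 2) * u ^ 3 = ∫ t in (0 : ℝ)..u, 2 / π ^ 2 * t ^ 2 := by
        rw [intervalIntegral.integral_const_mul, integral_pow]; ring
    _ ≤ ∫ t in (0 : ℝ)..u, (1 - cos t) := by
        refine intervalIntegral.integral_mono_on hu
          ((by fun_prop : Continuous _).intervalIntegrable _ _)
          ((by fun_prop : Continuous _).intervalIntegrable _ _) fun t ⟨ht0, htu⟩ => ?_
        have := cos_le_one_sub_mul_cos_sq (abs_le.2 ⟨by linarith [pi_pos], htu.trans huπ⟩)
        linarith
    _ = u - sin u := by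
        rw [intervalIntegral.integral_sub intervalIntegrable_const
          (continuous_cos.intervalIntegrable _ _), integral_cos]
        simp

lemma integral_one_sub_cos_mul {u : ℝ} (hu : u ≠ 0) :
    ∫ z in (0 : ℝ)..1, (1 - cos (u * z)) = (u - sin u) / u := by
  rw [intervalIntegral.integral_sub intervalIntegrable_const
    ((by fun_prop : Continuous _).intervalIntegrable _ _),
    intervalIntegral.integral_comp_mul_left cos hu, integral_cos]
  field_simp
  simp [mul_sub, mul_inv_cancel_left₀ hu]

lemma mul_min_one_sq_le_integral_one_sub_cos_mul {u : ℝ} (hu : 0 ≤ u) :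
    2 / (3 * π ^ 2) * min 1 (u ^ 2) ≤ ∫ z in (0 : ℝ)..1, (1 - cos (u * z)) := by
  rcases hu.eq_or_lt with rfl | hu
  · simp
  rw [integral_one_sub_cos_mul hu.ne', le_div_iff₀ hu]
  rcases le_total u π with huπ | huπ
  · calc 2 / (3 * π ^ 2) * min 1 (u ^ 2) * u ≤ 2 / (3 * π ^ 2) * u ^ 2 * u := by
          gcongr; exact min_le_right _ _
      _ ≤ u - sin u := by linarith [mul_cube_le_sub_sin hu.le huπ]
  · have hk : 2 / (3 * π ^ 2) ≤ 1 / 2 := by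
      rw [div_le_div_iff₀ (by positivity) two_pos]; nlinarith [pi_gt_three]
    calc 2 / (3 * π ^ 2) * min 1 (u ^ 2) * u ≤ 1 / 2 * 1 * u := by
          gcongr; exact min_le_left _ _
      _ ≤ u - sin u := by linarith [sin_le_one u, pi_gt_three]

lemma min_one_sq_mul_le {s y : ℝ} (hy0 : 0 ≤ y) (hy1 : y ≤ 1) :
    min 1 (s ^ 2) * y ^ 2 ≤ min 1 ((s * y) ^ 2) := by
  rw [mul_pow, min_mul_of_nonneg _ _ (sq_nonneg y), one_mul]
  exact min_le_min_right _ (pow_le_one₀ hy0 hy1)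

section CosineTransform

variable {w : ℝ → ℝ}

lemma integral_integral_mul_one_sub_cos_swap (hw : IntervalIntegrable w volume 0 1) (s : ℝ) :
    ∫ z in (0 : ℝ)..1, ∫ y in (0 : ℝ)..1, w y * (1 - cos (s * z * y)) =
      ∫ y in (0 : ℝ)..1, w y * ∫ z in (0 : ℝ)..1, (1 - cos (s * y * z)) := by
  set μ := volume.restrict (Ioc (0 : ℝ) 1)
  have hF : Integrable (Function.uncurry fun z y => w y * (1 - cos (s * z * y))) (μ.prod μ) := by
    refine ((integrable_const (2 : ℝ)).mul_prod hw.1.norm).mono' ?_ (ae_of_all _ fun q => ?_)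
    · exact hw.1.aestronglyMeasurable.comp_snd.mul
        (by fun_prop : Continuous fun q : ℝ × ℝ => 1 - cos (s * q.1 * q.2)).aestronglyMeasurable
    · rw [Function.uncurry_apply_pair, norm_mul, mul_comm]
      gcongr
      rw [Real.norm_eq_abs, abs_le]
      constructor <;> linarith [cos_le_one (s * q.1 * q.2), neg_one_le_cos (s * q.1 * q.2)]
  simp only [intervalIntegral.integral_of_le zero_le_one]
  rw [integral_integral_swap hF]
  refine integral_congr_ae (ae_of_all _ fun y => ?_)
  simp only [← MeasureTheory.integral_const_mul, mul_right_comm s]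
  rfl

lemma mul_integral_mul_sq_le_integral_integral_mul_one_sub_cos
    (hw : IntervalIntegrable w volume 0 1) (hw0 : ∀ y ∈ Icc (0 : ℝ) 1, 0 ≤ w y) {s : ℝ}
    (hs : 0 ≤ s) :
    2 / (3 * π ^ 2) * min 1 (s ^ 2) * ∫ y in (0 : ℝ)..1, w y * y ^ 2 ≤
      ∫ z in (0 : ℝ)..1, ∫ y in (0 : ℝ)..1, w y * (1 - cos (s * z * y)) := by
  rw [integral_integral_mul_one_sub_cos_swap hw, ← intervalIntegral.integral_const_mul]
  have hcont : Continuous fun y => ∫ z in (0 : ℝ)..1, (1 - cos (s * y * z)) :=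
    intervalIntegral.continuous_parametric_intervalIntegral_of_continuous' (by fun_prop) 0 1
  refine intervalIntegral.integral_mono_on zero_le_one
    ((hw.mul_continuousOn (continuous_pow 2).continuousOn).const_mul _)
    (hw.mul_continuousOn hcont.continuousOn) fun y ⟨hy0, hy1⟩ => ?_
  have hwy := hw0 y ⟨hy0, hy1⟩
  calc 2 / (3 * π ^ 2) * min 1 (s ^ 2) * (w y * y ^ 2)
      = w y * (2 / (3 * π ^ 2) * (min 1 (s ^ 2) * y ^ 2)) := by ring
    _ ≤ w y * (2 / (3 * π ^ 2) * min 1 ((s * y) ^ 2)) := by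
      gcongr; exact min_one_sq_mul_le hy0 hy1
    _ ≤ w y * ∫ z in (0 : ℝ)..1, (1 - cos (s * y * z)) := by
      gcongr; exact mul_min_one_sq_le_integral_one_sub_cos_mul (mul_nonneg hs hy0)

lemma exists_pos_mul_min_one_sq_le_integral_one_sub_integral_mul_cos
    (hw : IntervalIntegrable w volume 0 1) (hw0 : ∀ y ∈ Icc (0 : ℝ) 1, 0 ≤ w y)
    (hw2 : 0 < ∫ y in (0 : ℝ)..1, w y * y ^ 2) {c : ℝ} (hc : 0 < c)
    (hcw : c * ∫ y in (0 : ℝ)..1, w y = 1) :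
    ∃ C₁ : ℝ, 0 < C₁ ∧ ∀ s : ℝ, 0 ≤ s → C₁ * min 1 (s ^ 2) ≤
      ∫ z in (0 : ℝ)..1, (1 - c * ∫ y in (0 : ℝ)..1, w y * cos (s * z * y)) := by
  refine ⟨c * (2 / (3 * π ^ 2) * ∫ y in (0 : ℝ)..1, w y * y ^ 2), by positivity,
    fun s hs => ?_⟩
  have hcos (x : ℝ) : 1 - c * ∫ y in (0 : ℝ)..1, w y * cos (x * y) =
      c * ∫ y in (0 : ℝ)..1, w y * (1 - cos (x * y)) := by
    simp_rw [mul_one_sub]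
    rw [intervalIntegral.integral_sub hw (hw.mul_continuousOn (by fun_prop)), mul_sub, hcw]
  simp_rw [hcos, intervalIntegral.integral_const_mul]
  rw [mul_assoc, mul_right_comm (2 / _)]
  gcongr
  exact mul_integral_mul_sq_le_integral_integral_mul_one_sub_cos hw hw0 hs

end CosineTransform

theorem averaged_bessel_lower (α : ℝ) (hα : α > -1/2) (j : ℝ → ℝ)
    (hj : ∀ r : ℝ, j r = (2 * Real.Gamma (α + 1) / (Real.sqrt Real.pi * Real.Gamma (α + 1/2))) *
      ∫ y in (0:ℝ)..1, (1 - y ^ 2) ^ (α - 1/2) * Real.cos (r * y)) :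
    ∃ C₁ : ℝ, 0 < C₁ ∧ ∀ lam r : ℝ, 0 < lam → 0 < r →
      ∫ z in (0:ℝ)..1, (1 - j (lam * z / r)) ≥ C₁ * min 1 ((lam / r) ^ 2) := by
  have hw := intervalIntegrable_one_sub_sq_rpow (by linarith : -1 < α - 1 / 2)
  have hw0 : ∀ y ∈ Icc (0 : ℝ) 1, 0 ≤ (1 - y ^ 2) ^ (α - 1 / 2) := fun y ⟨hy0, hy1⟩ =>
    rpow_nonneg (by nlinarith) _
  have hw2 : 0 < ∫ y in (0 : ℝ)..1, (1 - y ^ 2) ^ (α - 1 / 2) * y ^ 2 :=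
    intervalIntegral.intervalIntegral_pos_of_pos_on
      (hw.mul_continuousOn (continuous_pow 2).continuousOn)
      (fun y ⟨hy0, hy1⟩ => mul_pos (rpow_pos_of_pos (by nlinarith) _) (by positivity)) one_pos
  have hc : 0 < 2 * Gamma (α + 1) / (√π * Gamma (α + 1 / 2)) := by
    have := Gamma_pos_of_pos (by linarith : 0 < α + 1)
    have := Gamma_pos_of_pos (by linarith : 0 < α + 1 / 2)
    positivity
  obtain ⟨C₁, hC₁, hbound⟩ := exists_pos_mul_min_one_sq_le_integral_one_sub_integral_mul_cos hw
    hw0 hw2 hc (mehler_const_mul_integral_one_sub_sq_rpow hα)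
  refine ⟨C₁, hC₁, fun lam r hlam hr => ?_⟩
  simp_rw [hj, mul_div_right_comm lam]
  exact hbound _ (by positivity)
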